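/- Define, for x > 0, R⁽¹⁾(x) = e^{x}(e^{2x} − x − 1) and R⁽²⁾(x) = ( e^{x}(e^{x} − x − 1) + (e^{x} − 1) )·(e^{x} − 1). Then R⁽¹⁾(x) > 0 and R⁽²⁾(x) > 0 for all x > 0, and the ratio h(x) = R⁽²⁾(x)/R⁽¹⁾(x) is strictly monotone increasing and strictly concave on (0,∞), with lim_{x→0+} h(x) = 0 and lim_{x→∞} h(x) = 1. -/

import Mathlib

open Real Filter

/-- `R⁽¹⁾(x) = e^x(e^{2x} − x − 1)`. -/
noncomputable def Rone (x : ℝ) : ℝ := exp x * (exp (2 * x) - x - 1)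

/-- `R⁽²⁾(x) = (e^x(e^x − x − 1) + (e^x − 1))·(e^x − 1)`. -/
noncomputable def Rtwo (x : ℝ) : ℝ :=
  (exp x * (exp x - x - 1) + (exp x - 1)) * (exp x - 1)

/-!
Write `h = R⁽²⁾/R⁽¹⁾` and `E = eˣ`. Then `h' = E·N₁(x, E)/R⁽¹⁾²` and `h'' = E²·N₂(x, E)/R⁽¹⁾³`
for explicit polynomials `N₁ = ratioDerivNum` and `N₂ = ratioDeriv2Num`, so monotonicity and
concavity reduce to `N₁(x, eˣ) > 0` and `N₂(x, eˣ) < 0`. Each sign is certified by a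
substitution after which all coefficients are nonnegative, with `T(x) = 1 + x + x²/2`:
`E = 1 + x + s` for `N₁`; `x = 1 + a`, `E = T(x) + b` for `N₂` when `x ≥ 1`; and for `x ≤ 1`,
where `T(x) ≤ E ≤ T(x) + 2x³/9`, the rational parametrisation `x = 1/(1+p)`,
`E = T(x) + (4/9)x³·t/(1+t)` with `p, t ≥ 0`.
The limit at `0⁺` is the quotient of the derivatives `R⁽²⁾'(0) = 0` and `R⁽¹⁾'(0) = 1`; at `∞`
both `R⁽¹⁾` and `R⁽²⁾` are `e^{3x}(1 + o(1))`.
-/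

open Set Topology

lemma Rone_eq (x : ℝ) : Rone x = exp x ^ 3 - (x + 1) * exp x := by
  rw [Rone, two_mul, exp_add]; ring

lemma Rtwo_eq (x : ℝ) : Rtwo x = exp x ^ 3 - (x + 1) * exp x ^ 2 + (x - 1) * exp x + 1 := by
  rw [Rtwo]; ring

lemma Rone_pos {x : ℝ} (hx : 0 < x) : 0 < Rone x := by
  have h : 2 * x + 1 ≤ exp (2 * x) := add_one_le_exp (2 * x)
  exact mul_pos (exp_pos x) (by linarith)

lemma Rtwo_pos {x : ℝ} (hx : 0 < x) : 0 < Rtwo x := by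
  have h : x + 1 < exp x := add_one_lt_exp hx.ne'
  have : 0 < exp x * (exp x - x - 1) := mul_pos (exp_pos x) (by linarith)
  exact mul_pos (by linarith) (by linarith)

lemma hasDerivAt_Rone (x : ℝ) : HasDerivAt Rone (3 * exp x ^ 3 - (x + 2) * exp x) x := by
  have hE := hasDerivAt_exp x
  rw [show Rone = _ from funext Rone_eq]
  exact ((hE.fun_pow 3).fun_sub (((hasDerivAt_id' x).add_const 1).fun_mul hE)).congr_deriv
    (by push_cast; ring)

lemma hasDerivAt_Rtwo (x : ℝ) :
    HasDerivAt Rtwo (3 * exp x ^ 3 - (2 * x + 3) * exp x ^ 2 + x * exp x) x := by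
  have hE := hasDerivAt_exp x
  have hX := hasDerivAt_id' x
  rw [show Rtwo = _ from funext Rtwo_eq]
  exact ((((hE.fun_pow 3).fun_sub ((hX.add_const 1).fun_mul (hE.fun_pow 2))).fun_add
    ((hX.sub_const 1).fun_mul hE)).add_const 1).congr_deriv (by push_cast; ring)

def ratioDerivNum (x E : ℝ) : ℝ :=
  x * E ^ 4 + (2 - 4 * x) * E ^ 3 + (x ^ 2 + 2 * x - 2) * E ^ 2 - 2 * E + (x + 2)

lemma hasDerivAt_ratio {x : ℝ} (hx : Rone x ≠ 0) :
    HasDerivAt (fun y => Rtwo y / Rone y) (exp x * ratioDerivNum x (exp x) / Rone x ^ 2) x := by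
  refine ((hasDerivAt_Rtwo x).fun_div (hasDerivAt_Rone x) hx).congr_deriv ?_
  rw [Rone_eq, Rtwo_eq, ratioDerivNum]
  ring

lemma ratioDerivNum_pos {x E : ℝ} (hx : 0 < x) (hE : 1 + x ≤ E) : 0 < ratioDerivNum x E := by
  obtain ⟨s, hs, rfl⟩ : ∃ s, 0 ≤ s ∧ E = 1 + x + s := ⟨E - (1 + x), by linarith, by ring⟩
  unfold ratioDerivNum
  ring_nf
  positivity

lemma ratioDerivNum_exp_pos {x : ℝ} (hx : 0 < x) : 0 < ratioDerivNum x (exp x) :=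
  ratioDerivNum_pos hx (by linarith [add_one_le_exp x])

lemma continuousOn_ratio : ContinuousOn (fun x => Rtwo x / Rone x) (Ioi 0) :=
  HasDerivAt.continuousOn fun _ hx => hasDerivAt_ratio (Rone_pos hx).ne'

lemma ratio_strictMonoOn : StrictMonoOn (fun x => Rtwo x / Rone x) (Ioi 0) := by
  refine strictMonoOn_of_deriv_pos (convex_Ioi 0) continuousOn_ratio fun x hx => ?_
  rw [interior_Ioi] at hx
  rw [(hasDerivAt_ratio (Rone_pos hx).ne').deriv]
  have := ratioDerivNum_exp_pos hx
  have := Rone_pos hx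
  positivity

def ratioDeriv2Num (x E : ℝ) : ℝ :=
  (5 + 4 * x + x ^ 2) - 4 * E + (-13 - 5 * x - 3 * x ^ 2 - x ^ 3) * E ^ 2
    + (12 + 8 * x ^ 2) * E ^ 3 + (7 - 6 * x - 6 * x ^ 2) * E ^ 4 + (-8 + 8 * x) * E ^ 5
    + (1 - x) * E ^ 6

lemma hasDerivAt_ratioDeriv {x : ℝ} (hx : Rone x ≠ 0) :
    HasDerivAt (fun y => exp y * ratioDerivNum y (exp y) / Rone y ^ 2)
      (exp x ^ 2 * ratioDeriv2Num x (exp x) / Rone x ^ 3) x := by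
  have hE := hasDerivAt_exp x
  have hX := hasDerivAt_id' x
  have hN : HasDerivAt (fun y => ratioDerivNum y (exp y))
      ((4 * x + 1) * exp x ^ 4 + (2 - 12 * x) * exp x ^ 3 + (2 * x ^ 2 + 6 * x - 2) * exp x ^ 2
        - 2 * exp x + 1) x :=
    (((((hX.fun_mul (hE.fun_pow 4)).fun_add
      (((hasDerivAt_const x 2).fun_sub (hX.const_mul 4)).fun_mul (hE.fun_pow 3))).fun_add
      ((((hX.fun_pow 2).fun_add (hX.const_mul 2)).sub_const 2).fun_mul (hE.fun_pow 2))).fun_sub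
      (hE.const_mul 2)).fun_add (hX.add_const 2)).congr_deriv (by push_cast; ring)
  refine ((hE.fun_mul hN).fun_div ((hasDerivAt_Rone x).fun_pow 2) (pow_ne_zero 2 hx)).congr_deriv ?_
  unfold ratioDerivNum ratioDeriv2Num
  field_simp
  rw [Rone_eq]
  ring

lemma ratioDeriv2Num_neg_of_one_le {x E : ℝ} (hx : 1 ≤ x) (hE : 1 + x + x ^ 2 / 2 ≤ E) :
    ratioDeriv2Num x E < 0 := by
  obtain ⟨b, hb, rfl⟩ : ∃ b, 0 ≤ b ∧ E = 1 + x + x ^ 2 / 2 + b :=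
    ⟨E - (1 + x + x ^ 2 / 2), by linarith, by ring⟩
  obtain ⟨a, ha, rfl⟩ : ∃ a, 0 ≤ a ∧ x = 1 + a := ⟨x - 1, by linarith, by ring⟩
  rw [← neg_pos]
  unfold ratioDeriv2Num
  ring_nf
  positivity

lemma ratioDeriv2Num_neg_of_le_one {x E : ℝ} (hx₀ : 0 < x) (hx₁ : x ≤ 1)
    (hE : 1 + x + x ^ 2 / 2 ≤ E) (hE' : E < 1 + x + x ^ 2 / 2 + 4 / 9 * x ^ 3) :
    ratioDeriv2Num x E < 0 := by
  obtain ⟨s, hs₀, hs₁, rfl⟩ : ∃ s, 0 ≤ s ∧ s < 1 ∧ E = 1 + x + x ^ 2 / 2 + 4 / 9 * x ^ 3 * s :=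
    ⟨(E - (1 + x + x ^ 2 / 2)) / (4 / 9 * x ^ 3), div_nonneg (by linarith) (by positivity),
      (div_lt_one (by positivity)).2 (by linarith), by field_simp; ring⟩
  obtain ⟨t, ht, rfl⟩ : ∃ t, 0 ≤ t ∧ s = t / (1 + t) := by
    have : 0 < 1 - s := by linarith
    exact ⟨s / (1 - s), by positivity, by field_simp; ring⟩
  obtain ⟨p, hp, rfl⟩ : ∃ p, 0 ≤ p ∧ x = 1 / (1 + p) :=
    ⟨1 / x - 1, by rw [sub_nonneg, le_div_iff₀ hx₀]; linarith, by field_simp; ring⟩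
  rw [← neg_pos]
  unfold ratioDeriv2Num
  field_simp
  ring_nf
  positivity

lemma ratioDeriv2Num_exp_neg {x : ℝ} (hx : 0 < x) : ratioDeriv2Num x (exp x) < 0 := by
  rcases le_total 1 x with hx₁ | hx₁
  · exact ratioDeriv2Num_neg_of_one_le hx₁ (quadratic_le_exp_of_nonneg (by linarith))
  · refine ratioDeriv2Num_neg_of_le_one hx hx₁ (quadratic_le_exp_of_nonneg hx.le) ?_
    have h := exp_bound' hx.le hx₁ (n := 3) (by norm_num)
    norm_num [Finset.sum_range_succ, Nat.factorial] at h
    linarith [pow_pos hx 3]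

lemma strictAntiOn_ratioDeriv :
    StrictAntiOn (fun x => exp x * ratioDerivNum x (exp x) / Rone x ^ 2) (Ioi 0) := by
  have hderiv (x : ℝ) (hx : x ∈ Ioi 0) := hasDerivAt_ratioDeriv (Rone_pos hx).ne'
  refine strictAntiOn_of_deriv_neg (convex_Ioi 0) (HasDerivAt.continuousOn hderiv) fun x hx => ?_
  rw [interior_Ioi] at hx
  rw [(hderiv x hx).deriv]
  exact div_neg_of_neg_of_pos (mul_neg_of_pos_of_neg (by positivity) (ratioDeriv2Num_exp_neg hx))
    (pow_pos (Rone_pos hx) 3)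

lemma ratio_strictConcaveOn : StrictConcaveOn ℝ (Ioi 0) (fun x => Rtwo x / Rone x) := by
  refine StrictAntiOn.strictConcaveOn_of_deriv (convex_Ioi 0) continuousOn_ratio ?_
  rw [interior_Ioi]
  exact strictAntiOn_ratioDeriv.congr fun x hx => (hasDerivAt_ratio (Rone_pos hx).ne').deriv.symm

lemma tendsto_ratio_nhdsGT_zero : Tendsto (fun x => Rtwo x / Rone x) (𝓝[>] 0) (𝓝 0) := by
  have hRtwo : HasDerivAt Rtwo 0 0 := (hasDerivAt_Rtwo 0).congr_deriv (by norm_num)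
  have hRone : HasDerivAt Rone 1 0 := (hasDerivAt_Rone 0).congr_deriv (by norm_num)
  have h := hRtwo.tendsto_slope_zero_right.div hRone.tendsto_slope_zero_right one_ne_zero
  rw [zero_div] at h
  refine h.congr' (eventually_of_mem self_mem_nhdsWithin fun t ht => ?_)
  have hRtwo0 : Rtwo 0 = 0 := by simp [Rtwo]
  have hRone0 : Rone 0 = 0 := by simp [Rone]
  simp only [zero_add, smul_eq_mul, hRtwo0, hRone0, sub_zero]
  exact mul_div_mul_left _ _ (inv_ne_zero (ne_of_gt ht))

lemma tendsto_ratio_atTop : Tendsto (fun x => Rtwo x / Rone x) atTop (𝓝 1) := by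
  have ht : Tendsto (fun x : ℝ => exp (-x)) atTop (𝓝 0) := tendsto_exp_neg_atTop_nhds_zero
  have hxt : Tendsto (fun x : ℝ => x * exp (-x)) atTop (𝓝 0) := by
    simpa using tendsto_pow_mul_exp_neg_atTop_nhds_zero 1
  have hnum : Tendsto (fun x => Rtwo x / exp x ^ 3) atTop (𝓝 1) := by
    convert ((tendsto_const_nhds (x := (1 : ℝ))).sub (hxt.add (ht.mul ht))).mul
      ((tendsto_const_nhds (x := (1 : ℝ))).sub ht) using 2 with x
    · rw [Rtwo_eq, exp_neg]
      field_simp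
      ring
    · norm_num
  have hden : Tendsto (fun x => Rone x / exp x ^ 3) atTop (𝓝 1) := by
    convert (tendsto_const_nhds (x := (1 : ℝ))).sub ((hxt.add ht).mul ht) using 2 with x
    · rw [Rone_eq, exp_neg]
      field_simp
    · norm_num
  refine (div_one (1 : ℝ) ▸ hnum.div hden one_ne_zero).congr fun x => ?_
  exact div_div_div_cancel_right₀ (pow_ne_zero 3 (exp_pos x).ne') _ _

/-- `R⁽¹⁾` and `R⁽²⁾` are positive on `(0,∞)`, and their ratio
`h = R⁽²⁾/R⁽¹⁾` is strictly increasing and strictly concave on `(0,∞)`, with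
`h(x) → 0` as `x → 0+` and `h(x) → 1` as `x → ∞`. -/
theorem ratio_properties :
    (∀ x > (0 : ℝ), 0 < Rone x) ∧
    (∀ x > (0 : ℝ), 0 < Rtwo x) ∧
    StrictMonoOn (fun x => Rtwo x / Rone x) (Set.Ioi (0 : ℝ)) ∧
    StrictConcaveOn ℝ (Set.Ioi (0 : ℝ)) (fun x => Rtwo x / Rone x) ∧
    Tendsto (fun x => Rtwo x / Rone x) (nhdsWithin 0 (Set.Ioi 0)) (nhds 0) ∧
    Tendsto (fun x => Rtwo x / Rone x) atTop (nhds 1) :=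
  ⟨fun _ => Rone_pos, fun _ => Rtwo_pos, ratio_strictMonoOn, ratio_strictConcaveOn,
    tendsto_ratio_nhdsGT_zero, tendsto_ratio_atTop⟩
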